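/- The holomorphic Jacobi theta function with characteristics θ[α;β](τ) := ∑_{n∈ℤ} exp(iπ(n+α)²τ) exp(2πi(n+α)β) admits the product representation θ[α;β](τ) = η(τ) e^{2πiαβ} q^{α²/2 − 1/24} ∏_{k≥1}(1 + q^{k+α−1/2} e^{2πiβ})(1 + q^{k−α−1/2} e^{−2πiβ}) where q = e^{2πiτ}, for τ in the upper half-plane and real α, β. -/

import Mathlib

/-!
Truncating both products after `N` factors gives a Laurent polynomial in `w`,
`∏_{k<N} (1 + q^{2k+1} w)(1 + q^{2k+1} w⁻¹) = ∑_{|n| ≤ N} [2N, N+n]_{q²} q^{n²} wⁿ`,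
which follows one factor at a time from the Pascal recurrences of the Gaussian binomials.
As `N → ∞` the coefficients `[2N, N+n]_{q²}` stay bounded and tend to `1 / ∏_{k≥1} (1 - q^{2k})`,
so dominated convergence yields Jacobi's triple product
`∑ q^{n²} wⁿ = ∏_{k≥1} (1 - q^{2k})(1 + q^{2k-1} w)(1 + q^{2k-1} w⁻¹)`.
With `q = e^{πiτ}` and `w = e^{2πi(ατ + β)}` this is the stated identity, once
`e^{πiα²τ + 2πiαβ}` is pulled out of the theta series.
-/

open Complex

/-- `q^x := exp(2πiτx)` for a real exponent `x`. -/
noncomputable def qpow (τ : ℂ) (x : ℝ) : ℂ :=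
  Complex.exp (2 * (Real.pi : ℂ) * Complex.I * τ * (x : ℂ))

/-- The Dedekind eta function `η(τ) = q^{1/24} ∏_{k≥1} (1 − q^k)`. -/
noncomputable def dedekindEta (τ : ℂ) : ℂ :=
  qpow τ (1 / 24) * ∏' k : ℕ, (1 - qpow τ ((k : ℝ) + 1))

open Filter Topology Function Finset
open scoped Real

section QFactorial

variable {R : Type*} [CommRing R]

def qFactorial (Q : R) (m : ℕ) : R := ∏ k ∈ range m, (1 - Q ^ (k + 1))

variable {Q : R}

lemma qFactorial_zero : qFactorial Q 0 = 1 := prod_range_zero _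

lemma qFactorial_succ (m : ℕ) : qFactorial Q (m + 1) = qFactorial Q m * (1 - Q ^ (m + 1)) :=
  prod_range_succ _ m

lemma one_sub_pow_succ_ne_zero (hQ : ¬ IsOfFinOrder Q) (k : ℕ) : 1 - Q ^ (k + 1) ≠ 0 := fun h =>
  hQ (isOfFinOrder_iff_pow_eq_one.2 ⟨k + 1, k.succ_pos, (sub_eq_zero.1 h).symm⟩)

lemma qFactorial_ne_zero [IsDomain R] (hQ : ¬ IsOfFinOrder Q) (m : ℕ) : qFactorial Q m ≠ 0 :=
  prod_ne_zero_iff.2 fun k _ => one_sub_pow_succ_ne_zero hQ k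

end QFactorial

section GaussianBinomial

variable {K : Type*} [Field K] (Q : K)

/-- `qBinomial Q i j` is the Gaussian binomial coefficient `[i + j, i]_Q`, extended by zero to
negative indices, so that its Pascal recurrences hold on all of `ℤ × ℤ` except at the origin. -/
def qBinomial : ℤ → ℤ → K
  | .ofNat a, .ofNat b => qFactorial Q (a + b) / (qFactorial Q a * qFactorial Q b)
  | _, _ => 0

variable {Q}

lemma qBinomial_natCast (a b : ℕ) :
    qBinomial Q a b = qFactorial Q (a + b) / (qFactorial Q a * qFactorial Q b) := rfl

lemma qBinomial_of_neg_left {i : ℤ} (hi : i < 0) (j : ℤ) : qBinomial Q i j = 0 := by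
  obtain ⟨a, rfl⟩ := Int.exists_eq_neg_ofNat hi.le
  rcases a with _ | a
  · simp at hi
  · rfl

lemma qBinomial_comm (i j : ℤ) : qBinomial Q i j = qBinomial Q j i := by
  rcases i with a | a <;> rcases j with b | b
  · rw [qBinomial, qBinomial, add_comm, mul_comm]
  all_goals rfl

lemma qBinomial_of_neg_right (i : ℤ) {j : ℤ} (hj : j < 0) : qBinomial Q i j = 0 := by
  rw [qBinomial_comm, qBinomial_of_neg_left hj]

lemma qBinomial_zero_left (hQ : ¬ IsOfFinOrder Q) (b : ℕ) : qBinomial Q 0 b = 1 := by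
  rw [← Nat.cast_zero, qBinomial_natCast, zero_add, qFactorial_zero, one_mul,
    div_self (qFactorial_ne_zero hQ b)]

lemma qBinomial_zero_right (hQ : ¬ IsOfFinOrder Q) (a : ℕ) : qBinomial Q a 0 = 1 := by
  rw [qBinomial_comm, qBinomial_zero_left hQ]

lemma qBinomial_succ_succ (hQ : ¬ IsOfFinOrder Q) (a b : ℕ) :
    qBinomial Q (a + 1 : ℕ) (b + 1 : ℕ)
      = qBinomial Q a (b + 1 : ℕ) + Q ^ (a + 1) * qBinomial Q (a + 1 : ℕ) b := by
  simp only [qBinomial_natCast, show a + 1 + (b + 1) = a + b + 1 + 1 by ring,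
    show a + (b + 1) = a + b + 1 by ring, show a + 1 + b = a + b + 1 by ring, qFactorial_succ]
  have hF := qFactorial_ne_zero hQ
  have hQk := one_sub_pow_succ_ne_zero hQ
  field_simp [hF a, hF b, hQk a, hQk b]
  ring

lemma qBinomial_eq_add (hQ : ¬ IsOfFinOrder Q) {i j : ℤ} (hij : i ≠ 0 ∨ j ≠ 0) :
    qBinomial Q i j = qBinomial Q (i - 1) j + Q ^ i * qBinomial Q i (j - 1) := by
  rcases lt_or_ge i 0 with hi | hi
  · simp [qBinomial_of_neg_left hi, qBinomial_of_neg_left (show i - 1 < 0 by omega)]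
  rcases lt_or_ge j 0 with hj | hj
  · simp [qBinomial_of_neg_right _ hj, qBinomial_of_neg_right _ (show j - 1 < 0 by omega)]
  lift i to ℕ using hi
  lift j to ℕ using hj
  rcases i with _ | a
  · rcases j with _ | b
    · simp at hij
    · simp only [Nat.cast_zero, Nat.cast_succ, zero_sub, add_sub_cancel_right, zpow_zero,
        one_mul]
      rw [qBinomial_of_neg_left neg_one_lt_zero, zero_add, ← Nat.cast_succ,
        qBinomial_zero_left hQ, qBinomial_zero_left hQ]
  rcases j with _ | b
  · simp only [Nat.cast_zero, Nat.cast_succ, zero_sub, add_sub_cancel_right]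
    rw [qBinomial_of_neg_right _ neg_one_lt_zero, mul_zero, add_zero, ← Nat.cast_succ,
      qBinomial_zero_right hQ, qBinomial_zero_right hQ]
  · rw [qBinomial_succ_succ hQ a b, zpow_natCast]
    push_cast
    simp

lemma qBinomial_eq_add' (hQ : ¬ IsOfFinOrder Q) {i j : ℤ} (hij : i ≠ 0 ∨ j ≠ 0) :
    qBinomial Q i j = qBinomial Q i (j - 1) + Q ^ j * qBinomial Q (i - 1) j := by
  rw [qBinomial_comm, qBinomial_eq_add hQ hij.symm, qBinomial_comm (j - 1), qBinomial_comm j]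

end GaussianBinomial

section FiniteTripleProduct

variable {K : Type*} [Field K]

lemma finsum_mul_one_add_mul_zpow {w : K} (hw : w ≠ 0) {g : ℤ → K} (hg : HasFiniteSupport g)
    (c : K) (k : ℤ) :
    (∑ᶠ n, g n * w ^ n) * (1 + c * w ^ k) = ∑ᶠ n, (g n + c * g (n - k)) * w ^ n := by
  have hgw : HasFiniteSupport fun n => g n * w ^ n := hg.mul_left _
  have hshift : HasFiniteSupport fun n => c * g (n - k) * w ^ n :=
    ((hg.comp_of_injective (sub_left_injective (b := k))).mul_right _).mul_left _
  calc (∑ᶠ n, g n * w ^ n) * (1 + c * w ^ k)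
      = ∑ᶠ n, g n * w ^ n + ∑ᶠ n, c * g (n + k - k) * w ^ (n + k) := by
        rw [mul_add, mul_one, finsum_mul]
        congr 1
        exact finsum_congr fun n => by rw [add_sub_cancel_right, zpow_add₀ hw]; ring
    _ = ∑ᶠ n, g n * w ^ n + ∑ᶠ n, c * g (n - k) * w ^ n := by
        congr 1
        exact finsum_comp_equiv (Equiv.addRight k) (f := fun n => c * g (n - k) * w ^ n)
    _ = ∑ᶠ n, (g n + c * g (n - k)) * w ^ n := by
        rw [← finsum_add_distrib hgw hshift]
        exact finsum_congr fun n => by ring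

lemma hasFiniteSupport_qBinomial_add_sub (Q : K) (a b : ℤ) :
    HasFiniteSupport fun n => qBinomial Q (b + n) (a - n) := by
  refine (Set.finite_Icc (-b) a).subset fun n hn => ?_
  rw [mem_support] at hn
  by_contra h
  rcases not_and_or.1 h with h | h
  · exact hn (qBinomial_of_neg_left (by omega) _)
  · exact hn (qBinomial_of_neg_right _ (by omega))

variable {q w : K}

lemma qBinomial_mul_zpow_sq_succ_left (hq : q ≠ 0) (hQ : ¬ IsOfFinOrder (q ^ 2)) (a b : ℕ)
    (n : ℤ) :
    qBinomial (q ^ 2) (b + n) (a - n) * q ^ (n ^ 2)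
        + q ^ (2 * a + 1) * (qBinomial (q ^ 2) (b + (n - 1)) (a - (n - 1)) * q ^ ((n - 1) ^ 2))
      = qBinomial (q ^ 2) (b + n) ((a + 1 : ℕ) - n) * q ^ (n ^ 2) := by
  have hrec : qBinomial (q ^ 2) (b + n) ((a + 1 : ℕ) - n) = qBinomial (q ^ 2) (b + n) (a - n)
      + (q ^ 2) ^ (a - (n - 1)) * qBinomial (q ^ 2) (b + (n - 1)) (a - (n - 1)) := by
    convert qBinomial_eq_add' hQ (i := b + n) (j := (a + 1 : ℕ) - n) (by omega) using 3 <;>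
      push_cast <;> ring_nf
  have hexp :
      (q ^ 2) ^ ((a : ℤ) - (n - 1)) * q ^ (n ^ 2) = q ^ (2 * a + 1) * q ^ ((n - 1) ^ 2) := by
    rw [← zpow_natCast q 2, ← zpow_mul, ← zpow_natCast q (2 * a + 1), ← zpow_add₀ hq,
      ← zpow_add₀ hq]
    congr 1
    push_cast
    ring
  rw [hrec]
  linear_combination (-qBinomial (q ^ 2) (b + (n - 1)) (a - (n - 1))) * hexp

lemma qBinomial_mul_zpow_sq_succ_right (hq : q ≠ 0) (hQ : ¬ IsOfFinOrder (q ^ 2)) (a b : ℕ)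
    (n : ℤ) :
    qBinomial (q ^ 2) (b + n) (a - n) * q ^ (n ^ 2)
        + q ^ (2 * b + 1) * (qBinomial (q ^ 2) (b + (n + 1)) (a - (n + 1)) * q ^ ((n + 1) ^ 2))
      = qBinomial (q ^ 2) ((b + 1 : ℕ) + n) (a - n) * q ^ (n ^ 2) := by
  have hrec : qBinomial (q ^ 2) ((b + 1 : ℕ) + n) (a - n) = qBinomial (q ^ 2) (b + n) (a - n)
      + (q ^ 2) ^ (b + (n + 1)) * qBinomial (q ^ 2) (b + (n + 1)) (a - (n + 1)) := by
    convert qBinomial_eq_add hQ (i := (b + 1 : ℕ) + n) (j := a - n) (by omega) using 3 <;>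
      push_cast <;> ring_nf
  have hexp :
      (q ^ 2) ^ ((b : ℤ) + (n + 1)) * q ^ (n ^ 2) = q ^ (2 * b + 1) * q ^ ((n + 1) ^ 2) := by
    rw [← zpow_natCast q 2, ← zpow_mul, ← zpow_natCast q (2 * b + 1), ← zpow_add₀ hq,
      ← zpow_add₀ hq]
    congr 1
    push_cast
    ring
  rw [hrec]
  linear_combination (-qBinomial (q ^ 2) (b + (n + 1)) (a - (n + 1))) * hexp

theorem prod_mul_prod_eq_finsum_qBinomial (hq : q ≠ 0) (hw : w ≠ 0)
    (hQ : ¬ IsOfFinOrder (q ^ 2)) (a b : ℕ) :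
    (∏ k ∈ range a, (1 + q ^ (2 * k + 1) * w)) * ∏ k ∈ range b, (1 + q ^ (2 * k + 1) * w⁻¹)
      = ∑ᶠ n : ℤ, qBinomial (q ^ 2) (b + n) (a - n) * q ^ (n ^ 2) * w ^ n := by
  have hsupp (a b : ℕ) :
      HasFiniteSupport fun n : ℤ => qBinomial (q ^ 2) (b + n) (a - n) * q ^ (n ^ 2) :=
    (hasFiniteSupport_qBinomial_add_sub _ _ _).mul_left _
  induction b with
  | zero =>
    induction a with
    | zero =>
      rw [finsum_eq_single _ 0 fun n hn => ?_]
      · simpa using (qBinomial_zero_left hQ 0).symm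
      rcases lt_or_gt_of_ne hn with h | h
      · rw [qBinomial_of_neg_left (by omega), zero_mul, zero_mul]
      · rw [qBinomial_of_neg_right _ (by omega), zero_mul, zero_mul]
    | succ a ih =>
      rw [prod_range_succ, mul_right_comm, ih]
      convert finsum_mul_one_add_mul_zpow hw (hsupp a 0) (q ^ (2 * a + 1)) 1 using 1
      · rw [zpow_one]
      · exact finsum_congr fun n => by rw [qBinomial_mul_zpow_sq_succ_left hq hQ]
  | succ b ih =>
    rw [prod_range_succ, ← mul_assoc, ih, ← zpow_neg_one w,
      finsum_mul_one_add_mul_zpow hw (hsupp a b)]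
    exact finsum_congr fun n => by rw [sub_neg_eq_add, qBinomial_mul_zpow_sq_succ_right hq hQ]

end FiniteTripleProduct

lemma not_isOfFinOrder_of_norm_lt_one {A : Type*} [NormedRing A] [NormMulClass A]
    [NormOneClass A] {a : A} (ha : ‖a‖ < 1) : ¬ IsOfFinOrder a :=
  fun h => ha.ne h.norm_eq_one

section TripleProduct

variable {Q : ℂ}

lemma tendsto_qFactorial (hQ : ‖Q‖ < 1) :
    Tendsto (qFactorial Q) atTop (𝓝 (∏' k, (1 - Q ^ (k + 1)))) :=
  (ModularForm.multipliable_one_sub_pow hQ).hasProd.tendsto_prod_nat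

lemma tprod_one_sub_pow_ne_zero (hQ : ‖Q‖ < 1) : ∏' k, (1 - Q ^ (k + 1)) ≠ 0 := by
  simpa [← sub_eq_add_neg] using tprod_one_add_ne_zero_of_summable (f := fun k => -Q ^ (k + 1))
    (fun k => by simpa [← sub_eq_add_neg] using
      one_sub_pow_succ_ne_zero (not_isOfFinOrder_of_norm_lt_one hQ) k)
    (by simpa using (summable_nat_add_iff 1).mpr (summable_geometric_of_lt_one (norm_nonneg _) hQ))

lemma exists_norm_qBinomial_le (hQ : ‖Q‖ < 1) : ∃ C, ∀ i j, ‖qBinomial Q i j‖ ≤ C := by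
  have hF := tendsto_qFactorial hQ
  obtain ⟨C₁, hC₁⟩ := hF.norm.bddAbove_range
  obtain ⟨C₂, hC₂⟩ := (hF.inv₀ (tprod_one_sub_pow_ne_zero hQ)).norm.bddAbove_range
  have hC₁ (m : ℕ) : ‖qFactorial Q m‖ ≤ C₁ := hC₁ (Set.mem_range_self m)
  have hC₂ (m : ℕ) : ‖(qFactorial Q m)⁻¹‖ ≤ C₂ := hC₂ (Set.mem_range_self m)
  have hC₁₂ : 0 ≤ C₁ * (C₂ * C₂) :=
    mul_nonneg ((norm_nonneg _).trans (hC₁ 0)) (mul_self_nonneg C₂)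
  refine ⟨C₁ * (C₂ * C₂), fun i j => ?_⟩
  rcases lt_or_ge i 0 with hi | hi
  · simpa [qBinomial_of_neg_left hi] using hC₁₂
  rcases lt_or_ge j 0 with hj | hj
  · simpa [qBinomial_of_neg_right _ hj] using hC₁₂
  lift i to ℕ using hi
  lift j to ℕ using hj
  rw [qBinomial_natCast, div_eq_mul_inv, mul_inv, norm_mul, norm_mul]
  exact mul_le_mul (hC₁ _) (mul_le_mul (hC₂ _) (hC₂ _) (norm_nonneg _)
    ((norm_nonneg _).trans (hC₂ 0))) (by positivity) ((norm_nonneg _).trans (hC₁ 0))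

lemma tendsto_qBinomial_add_sub (hQ : ‖Q‖ < 1) (n : ℤ) :
    Tendsto (fun N : ℕ => qBinomial Q (N + n) (N - n)) atTop
      (𝓝 (∏' k, (1 - Q ^ (k + 1)))⁻¹) := by
  have hF := tendsto_qFactorial hQ
  have hE := tprod_one_sub_pow_ne_zero hQ
  have hFinv := hF.inv₀ hE
  have htoNat (m : ℤ) : Tendsto (fun N : ℕ => ((N : ℤ) + m).toNat) atTop atTop :=
    tendsto_atTop_atTop.2 fun b => ⟨b + m.natAbs, fun N hN => by omega⟩
  have hlim := (hF.comp (tendsto_id.const_mul_atTop' two_pos)).mul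
    ((hFinv.comp (htoNat n)).mul (hFinv.comp (htoNat (-n))))
  rw [mul_inv_cancel_left₀ hE] at hlim
  refine hlim.congr' ((eventually_ge_atTop n.natAbs).mono fun N hN => ?_)
  have hnat : qBinomial Q (N + n) (N - n)
      = qBinomial Q ((N + n).toNat : ℕ) ((N + -n).toNat : ℕ) := by
    congr 1 <;> omega
  simp only [comp_apply, id, hnat, qBinomial_natCast, div_eq_mul_inv, mul_inv,
    show ((N : ℤ) + n).toNat + ((N : ℤ) + -n).toNat = 2 * N by omega]

lemma summable_norm_pow_two_mul_add_one_mul {q : ℂ} (hq : ‖q‖ < 1) (w : ℂ) :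
    Summable fun k : ℕ => ‖q ^ (2 * k + 1) * w‖ := by
  have hq2 : ‖q‖ ^ 2 < 1 := pow_lt_one₀ (norm_nonneg q) hq two_ne_zero
  refine ((summable_geometric_of_lt_one (by positivity) hq2).mul_right (‖q‖ * ‖w‖)).congr
    fun k => ?_
  rw [norm_mul, norm_pow, pow_add, pow_mul]
  ring

lemma jacobiTheta₂_term_eq_zpow (n : ℤ) (z τ : ℂ) :
    jacobiTheta₂_term n z τ = cexp (π * I * τ) ^ (n ^ 2) * cexp (2 * π * I * z) ^ n := by
  rw [jacobiTheta₂_term, ← exp_int_mul, ← exp_int_mul, ← exp_add]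
  congr 1
  push_cast
  ring

theorem jacobiTheta₂_eq_tprod (z : ℂ) {τ : ℂ} (hτ : 0 < τ.im) :
    jacobiTheta₂ z τ = (∏' k : ℕ, (1 - (cexp (π * I * τ) ^ 2) ^ (k + 1)))
      * ∏' k : ℕ, ((1 + cexp (π * I * τ) ^ (2 * k + 1) * cexp (2 * π * I * z))
        * (1 + cexp (π * I * τ) ^ (2 * k + 1) * (cexp (2 * π * I * z))⁻¹)) := by
  set q := cexp (π * I * τ)
  set w := cexp (2 * π * I * z)
  have hq : ‖q‖ < 1 := by
    rw [norm_exp, Real.exp_lt_one_iff]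
    simpa using mul_pos Real.pi_pos hτ
  have hQ : ‖q ^ 2‖ < 1 := by rw [norm_pow]; exact pow_lt_one₀ (norm_nonneg q) hq two_ne_zero
  obtain ⟨C, hC⟩ := exists_norm_qBinomial_le hQ
  have hpartial (N : ℕ) : ∏ k ∈ range N, ((1 + q ^ (2 * k + 1) * w) * (1 + q ^ (2 * k + 1) * w⁻¹))
      = ∑' n : ℤ, qBinomial (q ^ 2) (N + n) (N - n) * jacobiTheta₂_term n z τ := by
    rw [prod_mul_distrib, prod_mul_prod_eq_finsum_qBinomial (exp_ne_zero _) (exp_ne_zero _)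
      (not_isOfFinOrder_of_norm_lt_one hQ),
      tsum_eq_finsum (f := fun n => qBinomial (q ^ 2) (N + n) (N - n) * jacobiTheta₂_term n z τ)
        ((hasFiniteSupport_qBinomial_add_sub _ _ _).mul_left _)]
    exact finsum_congr fun n => by rw [jacobiTheta₂_term_eq_zpow, mul_assoc]
  have hsum : Tendsto (fun N : ℕ => ∑' n : ℤ, qBinomial (q ^ 2) (N + n) (N - n)
      * jacobiTheta₂_term n z τ) atTop
      (𝓝 (∑' n : ℤ, (∏' k, (1 - (q ^ 2) ^ (k + 1)))⁻¹ * jacobiTheta₂_term n z τ)) :=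
    tendsto_tsum_of_dominated_convergence
      ((summable_norm_iff.2 ((summable_jacobiTheta₂_term_iff z τ).2 hτ)).mul_left C)
      (fun n => (tendsto_qBinomial_add_sub hQ n).mul_const _)
      (.of_forall fun N n => by
        rw [norm_mul]; exact mul_le_mul_of_nonneg_right (hC _ _) (norm_nonneg _))
  have hprod := ((multipliable_one_add_of_summable (summable_norm_pow_two_mul_add_one_mul hq w)).mul
    (multipliable_one_add_of_summable (summable_norm_pow_two_mul_add_one_mul hq w⁻¹))).hasProd
  have heq := tendsto_nhds_unique hprod.tendsto_prod_nat (hsum.congr fun N => (hpartial N).symm)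
  rw [tsum_mul_left] at heq
  rw [heq, ← mul_assoc, mul_inv_cancel₀ (tprod_one_sub_pow_ne_zero hQ), one_mul, jacobiTheta₂]

end TripleProduct

section CharacteristicForm

variable (τ : ℂ) (α β : ℝ)

lemma cexp_char_summand_eq (n : ℤ) :
    cexp (π * I * (((n : ℝ) + α : ℝ) : ℂ) ^ 2 * τ + 2 * π * I * (((n : ℝ) + α : ℝ) : ℂ) * β)
      = cexp (π * I * α ^ 2 * τ + 2 * π * I * α * β) * jacobiTheta₂_term n (α * τ + β) τ := by
  rw [jacobiTheta₂_term, ← exp_add]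
  congr 1
  push_cast
  ring

lemma qpow_natCast_add_one (k : ℕ) : qpow τ ((k : ℝ) + 1) = (cexp (π * I * τ) ^ 2) ^ (k + 1) := by
  rw [qpow, ← pow_mul, ← exp_nat_mul]
  congr 1
  push_cast
  ring

lemma qpow_add_mul_cexp (k : ℕ) :
    qpow τ (((k : ℝ) + 1) + α - 1 / 2) * cexp (2 * π * I * β)
      = cexp (π * I * τ) ^ (2 * k + 1) * cexp (2 * π * I * (α * τ + β)) := by
  rw [qpow, ← exp_nat_mul, ← exp_add, ← exp_add]
  congr 1
  push_cast
  ring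

lemma qpow_sub_mul_cexp_neg (k : ℕ) :
    qpow τ (((k : ℝ) + 1) - α - 1 / 2) * cexp (-2 * π * I * β)
      = cexp (π * I * τ) ^ (2 * k + 1) * (cexp (2 * π * I * (α * τ + β)))⁻¹ := by
  rw [qpow, ← exp_nat_mul, ← exp_neg, ← exp_add, ← exp_add]
  congr 1
  push_cast
  ring

lemma qpow_mul_cexp_mul_qpow :
    qpow τ (1 / 24) * cexp (2 * π * I * α * β) * qpow τ (α ^ 2 / 2 - 1 / 24)
      = cexp (π * I * α ^ 2 * τ + 2 * π * I * α * β) := by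
  rw [qpow, qpow, ← exp_add, ← exp_add]
  congr 1
  push_cast
  ring

end CharacteristicForm

/-- Jacobi triple product in characteristic form:
`∑_{n∈ℤ} e^{iπ(n+α)²τ} e^{2πi(n+α)β}
  = η(τ) e^{2πiαβ} q^{α²/2 − 1/24}
    ∏_{k≥1} (1 + q^{k+α−1/2} e^{2πiβ})(1 + q^{k−α−1/2} e^{−2πiβ})`. -/
theorem stmt_19 (τ : ℂ) (hτ : 0 < τ.im) (α β : ℝ) :
    (∑' n : ℤ, Complex.exp ((Real.pi : ℂ) * Complex.I * (((n : ℝ) + α : ℝ) : ℂ) ^ 2 * τ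
        + 2 * (Real.pi : ℂ) * Complex.I * (((n : ℝ) + α : ℝ) : ℂ) * (β : ℂ)))
      = dedekindEta τ * Complex.exp (2 * (Real.pi : ℂ) * Complex.I * (α : ℂ) * (β : ℂ))
        * qpow τ (α ^ 2 / 2 - 1 / 24)
        * ∏' k : ℕ,
            ((1 + qpow τ (((k : ℝ) + 1) + α - 1 / 2)
                * Complex.exp (2 * (Real.pi : ℂ) * Complex.I * (β : ℂ)))
              * (1 + qpow τ (((k : ℝ) + 1) - α - 1 / 2)
                * Complex.exp (-2 * (Real.pi : ℂ) * Complex.I * (β : ℂ)))) := by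
  rw [tsum_congr (cexp_char_summand_eq τ α β), tsum_mul_left, ← jacobiTheta₂,
    jacobiTheta₂_eq_tprod _ hτ, dedekindEta, ← qpow_mul_cexp_mul_qpow τ α β]
  simp only [qpow_natCast_add_one, qpow_add_mul_cexp, qpow_sub_mul_cexp_neg]
  ring
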